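/- For every integer p ≥ 2, the quantity B₁(p) := Σ_{r=1}^{p−1} (r−1)! · C(p−1, r−1)² · √((2(p−r))!) satisfies B₁(p) ≤ (p−1)! · (p−1)^{1/2} · C(2(p−1), p−1), and hence B₁(p) ≤ C · (p−1)! · 4^p for some absolute constant C > 0. -/

import Mathlib

noncomputable def B1 (p : ℕ) : ℝ :=
  ∑ r ∈ Finset.Icc 1 (p - 1),
    (Nat.factorial (r - 1) : ℝ) * (Nat.choose (p - 1) (r - 1) : ℝ) ^ 2 *
      Real.sqrt (Nat.factorial (2 * (p - r)))

/-!
Since `(2m)! = C(2m,m) m!²` and `C(n,k) k! (n-k)! = n!`, one factor `C(n,k) k! (n-k)!` of each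
term of `B1 (n+1)` collapses to `n!`, leaving `B1 (n+1) = n! Σ_{k<n} C(n,k) √C(2(n-k),n-k)`.
Cauchy–Schwarz with Vandermonde's `Σ C(n,k)² = C(2n,n)` and the monotonicity of the central
binomial coefficient bounds that sum by `√n C(2n,n)`; the cruder bounds `√C(2m,m) ≤ 2^m` and
`Σ C(n,k) = 2^n` bound it by `4^n`.
-/

open Finset Nat Real

lemma sqrt_factorial_two_mul (m : ℕ) :
    √((2 * m)! : ℝ) = √(centralBinom m : ℝ) * m ! := by
  have h : centralBinom m * m ! * m ! = (2 * m)! := by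
    rw [centralBinom_eq_two_mul_choose]
    simpa [two_mul] using choose_mul_factorial_mul_factorial (show m ≤ 2 * m by omega)
  rw [← h, cast_mul, cast_mul, mul_assoc, sqrt_mul (by positivity), sqrt_mul_self (by positivity)]

lemma B1_succ (n : ℕ) :
    B1 (n + 1) = n ! * ∑ k ∈ range n, (n.choose k : ℝ) * √(centralBinom (n - k) : ℝ) := by
  rw [B1, add_tsub_cancel_right, ← Ico_add_one_right_eq_Icc, sum_Ico_eq_sum_range,
    add_tsub_cancel_right, mul_sum]
  refine sum_congr rfl fun k hk => ?_
  have hfac : (n.choose k : ℝ) * k ! * (n - k)! = n ! := by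
    exact_mod_cast choose_mul_factorial_mul_factorial (mem_range.1 hk).le
  rw [show 1 + k - 1 = k by omega, show n + 1 - (1 + k) = n - k by omega,
    sqrt_factorial_two_mul, ← hfac]
  ring

lemma sum_range_choose_sq_le (n : ℕ) :
    ∑ k ∈ range n, (n.choose k : ℝ) ^ 2 ≤ centralBinom n := by
  rw [centralBinom_eq_two_mul_choose, ← sum_range_choose_sq]
  push_cast
  exact sum_le_sum_of_subset_of_nonneg (range_subset_range.2 n.le_succ) fun _ _ _ => by positivity

lemma sum_range_centralBinom_sub_le (n : ℕ) :
    ∑ k ∈ range n, (centralBinom (n - k) : ℝ) ≤ n * centralBinom n := by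
  simpa using sum_le_card_nsmul (range n) _ _ fun k _ =>
    (cast_le.2 (centralBinom_strictMono.monotone (n.sub_le k)) : (centralBinom (n - k) : ℝ) ≤ _)

lemma sum_range_choose_mul_sqrt_le_sqrt_mul (n : ℕ) :
    ∑ k ∈ range n, (n.choose k : ℝ) * √(centralBinom (n - k) : ℝ) ≤ √n * centralBinom n := by
  have hcb : (0 : ℝ) ≤ centralBinom n := by positivity
  calc ∑ k ∈ range n, (n.choose k : ℝ) * √(centralBinom (n - k) : ℝ)
      ≤ √(∑ k ∈ range n, (n.choose k : ℝ) ^ 2) *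
          √(∑ k ∈ range n, √(centralBinom (n - k) : ℝ) ^ 2) :=
        sum_mul_le_sqrt_mul_sqrt _ _ _
    _ ≤ √(centralBinom n) * √(n * centralBinom n) := by
        simp only [sq_sqrt (cast_nonneg _)]
        gcongr
        exacts [sum_range_choose_sq_le n, sum_range_centralBinom_sub_le n]
    _ = √n * centralBinom n := by
        rw [sqrt_mul (cast_nonneg _), mul_left_comm, mul_self_sqrt hcb]

lemma sqrt_centralBinom_le (m : ℕ) : √(centralBinom m : ℝ) ≤ 2 ^ m := by
  rw [sqrt_le_left (by positivity), ← pow_mul, mul_comm, pow_mul]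
  exact_mod_cast (centralBinom_le_four_pow m).trans_eq (by norm_num)

lemma sum_range_choose_mul_sqrt_le_four_pow (n : ℕ) :
    ∑ k ∈ range n, (n.choose k : ℝ) * √(centralBinom (n - k) : ℝ) ≤ 4 ^ n := by
  have hsum : ∑ k ∈ range n, (n.choose k : ℝ) ≤ 2 ^ n := by
    calc ∑ k ∈ range n, (n.choose k : ℝ) ≤ ∑ k ∈ range (n + 1), (n.choose k : ℝ) :=
          sum_le_sum_of_subset_of_nonneg (range_subset_range.2 n.le_succ) fun _ _ _ => by positivity
      _ = 2 ^ n := by exact_mod_cast sum_range_choose n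
  calc ∑ k ∈ range n, (n.choose k : ℝ) * √(centralBinom (n - k) : ℝ)
      ≤ ∑ k ∈ range n, (n.choose k : ℝ) * 2 ^ n := by
        gcongr with k
        exact (sqrt_centralBinom_le _).trans (pow_le_pow_right₀ one_le_two (n.sub_le k))
    _ ≤ 2 ^ n * 2 ^ n := by rw [← sum_mul]; gcongr
    _ = 4 ^ n := by rw [← mul_pow]; norm_num

theorem stmt_5 :
    (∀ p : ℕ, 2 ≤ p →
      B1 p ≤ (Nat.factorial (p - 1) : ℝ) * Real.sqrt (p - 1) *
        (Nat.choose (2 * (p - 1)) (p - 1) : ℝ)) ∧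
    (∃ C : ℝ, 0 < C ∧ ∀ p : ℕ, 2 ≤ p →
      B1 p ≤ C * (Nat.factorial (p - 1) : ℝ) * 4 ^ p) := by
  refine ⟨fun p hp => ?_, ⟨1, one_pos, fun p hp => ?_⟩⟩ <;>
    obtain ⟨n, rfl⟩ : ∃ n, p = n + 1 := ⟨p - 1, by omega⟩
  · rw [B1_succ, add_tsub_cancel_right, cast_add_one, add_sub_cancel_right, mul_assoc,
      ← centralBinom_eq_two_mul_choose]
    gcongr
    exact sum_range_choose_mul_sqrt_le_sqrt_mul n
  · rw [B1_succ, add_tsub_cancel_right, one_mul]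
    gcongr
    exact (sum_range_choose_mul_sqrt_le_four_pow n).trans
      (pow_le_pow_right₀ (by norm_num) n.le_succ)
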